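/- Let f : ℝ^d → ℝ be CPWL with compatible polyhedral partition (R_k)_{k=1}^K, and let 𝓕 = ⋃_{k∼ℓ} F_{k,ℓ} be the set of all frontier points. Then f is convex on ℝ^d if and only if for every x ∈ 𝓕 and every v ∈ ℝ^d there exists ε > 0 such that the restriction of f to the segment [x − εv, x + εv] is convex. -/

import Mathlib

open Set Metric
open scoped RealInnerProductSpace


/-- A convex polyhedron in `ℝ^d`: a nonempty intersection of finitely many closed half-spaces. -/
def IsConvexPolyhedron {d : ℕ} (S : Set (EuclideanSpace ℝ (Fin d))) : Prop :=
  S.Nonempty ∧ ∃ (m : ℕ) (a : Fin m → EuclideanSpace ℝ (Fin d)) (c : Fin m → ℝ),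
    S = {x | ∀ i, ⟪a i, x⟫ ≤ c i}

/-- A polyhedral partition of `ℝ^d`: a finite family of convex polyhedra covering `ℝ^d`,
each with nonempty interior, and with pairwise disjoint interiors. -/
def IsPolyhedralPartition {d K : ℕ} (R : Fin K → Set (EuclideanSpace ℝ (Fin d))) : Prop :=
  (∀ k, IsConvexPolyhedron (R k)) ∧
  (⋃ k, R k) = Set.univ ∧
  (∀ k, (interior (R k)).Nonempty) ∧
  (∀ k l, k ≠ l → interior (R k) ∩ interior (R l) = ∅)

/-- Regions `R k` and `R l` are neighboring: `k ≠ l` and the affine hull of `R k ∩ R l`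
is an affine hyperplane, i.e. has dimension `d - 1`. -/
def Neighboring {d K : ℕ} (R : Fin K → Set (EuclideanSpace ℝ (Fin d))) (k l : Fin K) : Prop :=
  k ≠ l ∧ (R k ∩ R l).Nonempty ∧
    Module.finrank ℝ (affineSpan ℝ (R k ∩ R l)).direction = d - 1

/-- The frontier between two regions: the relative interior of `R k ∩ R l`. -/
noncomputable def frontierBetween {d K : ℕ} (R : Fin K → Set (EuclideanSpace ℝ (Fin d)))
    (k l : Fin K) : Set (EuclideanSpace ℝ (Fin d)) :=
  intrinsicInterior ℝ (R k ∩ R l)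

/-- The set `𝓕` of all frontier points: the union of all frontiers between
neighboring regions. -/
noncomputable def frontierPoints {d K : ℕ} (R : Fin K → Set (EuclideanSpace ℝ (Fin d))) :
    Set (EuclideanSpace ℝ (Fin d)) :=
  ⋃ (k) (l) (_ : Neighboring R k l), frontierBetween R k l


section OneDim
variable {g : ℝ → ℝ}

private lemma chainL {s x w z : ℝ} (h1 : s * (w - x) ≤ g w - g x)
    (h2 : s * (z - w) ≤ g z - g w) : s * (z - x) ≤ g z - g x := by
  have : s * (z - x) = s * (w - x) + s * (z - w) := by ring
  linarith

private lemma chainU {s x w z : ℝ} (h1 : g w - g x ≤ s * (w - x))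
    (h2 : g z - g w ≤ s * (z - w)) : g z - g x ≤ s * (z - x) := by
  have : s * (z - x) = s * (w - x) + s * (z - w) := by ring
  linarith

/-- Gluing two overlapping intervals of convexity. -/
lemma glue_convexOn {a b c d : ℝ} (hab : a ≤ b) (hbc : b < c) (hcd : c ≤ d)
    (h1 : ConvexOn ℝ (Icc a c) g) (h2 : ConvexOn ℝ (Icc b d) g) :
    ConvexOn ℝ (Icc a d) g := by
  apply convexOn_of_slope_mono_adjacent (convex_Icc a d)
  intro x y z hx hz hxy hyz
  have hyx : (0:ℝ) < y - x := by linarith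
  have hzy : (0:ℝ) < z - y := by linarith
  rcases le_or_gt z c with hzc | hcz
  · exact h1.slope_mono_adjacent ⟨hx.1, by linarith [hzc]⟩ ⟨by linarith [hx.1], hzc⟩ hxy hyz
  rcases le_or_gt b x with hbx | hxb
  · exact h2.slope_mono_adjacent ⟨hbx, hx.2⟩ ⟨by linarith [hbx], hz.2⟩ hxy hyz
  rcases le_or_gt y b with hyb | hby
  · -- y ≤ b : lower chain with two intermediate points in (b,c)
    set w1 := b + (c - b)/3 with hw1
    set w2 := b + 2*(c - b)/3 with hw2
    have hbw1 : b < w1 := by rw [hw1]; linarith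
    have hw12 : w1 < w2 := by rw [hw1, hw2]; linarith
    have hw2c : w2 < c := by rw [hw2]; linarith
    set s0 := (g y - g x) / (y - x) with hs0
    have t1 : s0 ≤ (g w1 - g y)/(w1 - y) :=
      h1.slope_mono_adjacent ⟨hx.1, by linarith⟩ ⟨by linarith [hx.1], by linarith⟩ hxy
        (by linarith)
    have t2 : (g w1 - g y)/(w1 - y) ≤ (g w2 - g w1)/(w2 - w1) :=
      h1.slope_mono_adjacent ⟨by linarith [hx.1], by linarith⟩ ⟨by linarith [hx.1], by linarith⟩
        (by linarith) hw12
    have t3 : (g w2 - g w1)/(w2 - w1) ≤ (g z - g w2)/(z - w2) :=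
      h2.slope_mono_adjacent ⟨le_of_lt hbw1, by linarith [hz.2]⟩ ⟨by linarith, hz.2⟩ hw12
        (by linarith)
    have L1 : s0 * (w1 - y) ≤ g w1 - g y := (le_div_iff₀ (by linarith)).mp t1
    have L2 : s0 * (w2 - w1) ≤ g w2 - g w1 := (le_div_iff₀ (by linarith)).mp (t1.trans t2)
    have L3 : s0 * (z - w2) ≤ g z - g w2 := (le_div_iff₀ (by linarith)).mp ((t1.trans t2).trans t3)
    exact (le_div_iff₀ hzy).mpr (chainL (g := g) (chainL (g := g) L1 L2) L3)
  rcases lt_or_ge y c with hyc | hcy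
  · -- b < y < c : one intermediate point
    set w1 := (y + c)/2 with hw1
    have hyw1 : y < w1 := by rw [hw1]; linarith
    have hw1c : w1 < c := by rw [hw1]; linarith
    set s0 := (g y - g x) / (y - x) with hs0
    have t1 : s0 ≤ (g w1 - g y)/(w1 - y) :=
      h1.slope_mono_adjacent ⟨hx.1, by linarith⟩ ⟨by linarith [hx.1], le_of_lt hw1c⟩ hxy hyw1
    have t2 : (g w1 - g y)/(w1 - y) ≤ (g z - g w1)/(z - w1) :=
      h2.slope_mono_adjacent ⟨le_of_lt hby, by linarith [hz.2]⟩ ⟨by linarith, hz.2⟩ hyw1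
        (by linarith)
    have L1 : s0 * (w1 - y) ≤ g w1 - g y := (le_div_iff₀ (by linarith)).mp t1
    have L2 : s0 * (z - w1) ≤ g z - g w1 := (le_div_iff₀ (by linarith)).mp (t1.trans t2)
    exact (le_div_iff₀ hzy).mpr (chainL (g := g) L1 L2)
  · -- c ≤ y : upper chain with two intermediate points in (b,c)
    set w1 := b + (c - b)/3 with hw1
    set w2 := b + 2*(c - b)/3 with hw2
    have hbw1 : b < w1 := by rw [hw1]; linarith
    have hw12 : w1 < w2 := by rw [hw1, hw2]; linarith
    have hw2c : w2 < c := by rw [hw2]; linarith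
    set s1 := (g z - g y) / (z - y) with hs1
    have t1 : (g w1 - g x)/(w1 - x) ≤ (g w2 - g w1)/(w2 - w1) :=
      h1.slope_mono_adjacent ⟨hx.1, by linarith⟩ ⟨by linarith [hx.1], by linarith⟩
        (by linarith) hw12
    have t2 : (g w2 - g w1)/(w2 - w1) ≤ (g y - g w2)/(y - w2) :=
      h2.slope_mono_adjacent ⟨le_of_lt hbw1, by linarith [hz.2]⟩ ⟨by linarith [hby], by linarith [hz.2]⟩
        hw12 (by linarith)
    have t3 : (g y - g w2)/(y - w2) ≤ s1 :=
      h2.slope_mono_adjacent ⟨by linarith, by linarith [hz.2]⟩ ⟨by linarith, hz.2⟩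
        (by linarith) hyz
    have U3 : g y - g w2 ≤ s1 * (y - w2) := (div_le_iff₀ (by linarith)).mp t3
    have U2 : g w2 - g w1 ≤ s1 * (w2 - w1) := (div_le_iff₀ (by linarith)).mp (t2.trans t3)
    have U1 : g w1 - g x ≤ s1 * (w1 - x) := (div_le_iff₀ (by linarith)).mp (t1.trans (t2.trans t3))
    exact (div_le_iff₀ hyx).mpr (chainU (g := g) (chainU (g := g) U1 U2) U3)

/-- Extending convexity from `Ico a b` to `Icc a b` for a continuous function. -/
lemma icc_convexOn_of_ico {a b : ℝ} (hg : Continuous g)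
    (h : ConvexOn ℝ (Ico a b) g) : ConvexOn ℝ (Icc a b) g := by
  apply convexOn_of_slope_mono_adjacent (convex_Icc a b)
  intro x y z hx hz hxy hyz
  have hzy : (0:ℝ) < z - y := by linarith
  rcases lt_or_eq_of_le hz.2 with hzb | rfl
  · exact h.slope_mono_adjacent ⟨hx.1, by linarith⟩ ⟨by linarith [hx.1], hzb⟩ hxy hyz
  · -- z = b : approximate from the left
    set u : ℕ → ℝ := fun n => z - (z - y)/(n+2) with hu
    have hulim : Filter.Tendsto u Filter.atTop (nhds z) := by
      rw [hu]
      have h2 : Filter.Tendsto (fun n : ℕ => (z - y)/(n+2)) Filter.atTop (nhds 0) := by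
        apply Filter.Tendsto.div_atTop (tendsto_const_nhds)
        exact Filter.tendsto_atTop_add_const_right _ 2 tendsto_natCast_atTop_atTop
      simpa using (tendsto_const_nhds (x := z)).sub h2
    have key : ∀ n : ℕ, (g y - g x)/(y - x) ≤ (g (u n) - g y)/(u n - y) := by
      intro n
      have hpos : (0:ℝ) < (z - y)/(n+2) := by positivity
      have hlt : (z - y)/(n+2) < z - y := by
        rw [div_lt_iff₀ (by positivity)]
        nlinarith
      have hyu : y < u n := by rw [hu]; simp only; linarith
      have huz : u n < z := by rw [hu]; simp only; linarith
      exact h.slope_mono_adjacent ⟨hx.1, by linarith [hx.1]⟩ ⟨by linarith [hx.1], huz⟩ hxy hyu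
    have hlim : Filter.Tendsto (fun n => (g (u n) - g y)/(u n - y)) Filter.atTop
        (nhds ((g z - g y)/(z - y))) := by
      apply Filter.Tendsto.div
      · exact ((hg.continuousAt.tendsto.comp hulim).sub tendsto_const_nhds)
      · exact hulim.sub tendsto_const_nhds
      · exact ne_of_gt hzy
    exact ge_of_tendsto hlim (Filter.Eventually.of_forall key)

/-- Local convexity on `[0,1]` implies convexity on `[0,1]`, for continuous `g`. -/
lemma convexOn_icc_of_local (hg : Continuous g)
    (h : ∀ t ∈ Icc (0:ℝ) 1, ∃ δ > (0:ℝ), ConvexOn ℝ (Icc (t - δ) (t + δ)) g) :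
    ConvexOn ℝ (Icc (0:ℝ) 1) g := by
  set S : Set ℝ := {t | t ∈ Icc (0:ℝ) 1 ∧ ConvexOn ℝ (Icc 0 t) g} with hS
  have h0 : (0:ℝ) ∈ S := by
    refine ⟨⟨le_refl _, zero_le_one⟩, ?_⟩
    apply convexOn_of_slope_mono_adjacent (convex_Icc _ _)
    intro x y z hx hz hxy hyz
    exact absurd (hx.1.trans_lt (hxy.trans (hyz.trans_le hz.2))) (lt_irrefl 0)
  have hSne : S.Nonempty := ⟨0, h0⟩
  have hbdd : BddAbove S := ⟨1, fun t ht => ht.1.2⟩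
  set s := sSup S with hs
  have hs0 : 0 ≤ s := le_csSup hbdd h0
  have hs1 : s ≤ 1 := csSup_le hSne fun t ht => ht.1.2
  have hIco : ConvexOn ℝ (Ico 0 s) g := by
    apply convexOn_of_slope_mono_adjacent (convex_Ico _ _)
    intro x y z hx hz hxy hyz
    obtain ⟨t, htS, hzt⟩ : ∃ t ∈ S, z < t := by
      by_contra hc
      push_neg at hc
      exact absurd (csSup_le hSne hc) (not_le.mpr hz.2)
    exact htS.2.slope_mono_adjacent ⟨hx.1, by linarith [hzt.le]⟩
      ⟨by linarith [hx.1], hzt.le⟩ hxy hyz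
  have hsS : s ∈ S := ⟨⟨hs0, hs1⟩, icc_convexOn_of_ico hg hIco⟩
  have hseq : s = 1 := by
    by_contra hne
    have hslt : s < 1 := lt_of_le_of_ne hs1 hne
    obtain ⟨δ, hδ, hδc⟩ := h s ⟨hs0, hs1⟩
    rcases eq_or_lt_of_le hs0 with hs0' | hs0'
    · -- s = 0
      set t0 := min δ 1 with ht0
      have ht0pos : 0 < t0 := lt_min hδ one_pos
      have : t0 ∈ S := by
        refine ⟨⟨ht0pos.le, min_le_right _ _⟩, hδc.subset ?_ (convex_Icc _ _)⟩
        intro w hw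
        rw [← hs0']
        exact ⟨by simpa using le_trans (by linarith) hw.1, hw.2.trans (by simp [← hs0'] at *; linarith [min_le_left δ 1])⟩
      linarith [le_csSup hbdd this, ht0pos, hs0']
    · -- s > 0
      set b := max 0 (s - δ) with hb
      set e := s + min δ (1 - s) with he
      have hbe : ConvexOn ℝ (Icc b e) g := by
        apply hδc.subset _ (convex_Icc _ _)
        intro w hw
        have h1 : s - δ ≤ b := le_max_right 0 (s - δ)
        have h2 : e ≤ s + δ := by rw [he]; linarith [min_le_left δ (1 - s)]
        exact ⟨le_trans h1 hw.1, hw.2.trans h2⟩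
      have hbs : b < s := by
        rw [hb]
        apply max_lt hs0' (by linarith)
      have hse : s < e := by rw [he]; simp; exact ⟨hδ, by linarith⟩
      have hglue : ConvexOn ℝ (Icc 0 e) g :=
        glue_convexOn (le_max_left _ _) hbs hse.le hsS.2 hbe
      have : e ∈ S := ⟨⟨by linarith, by rw [he]; linarith [min_le_right δ (1 - s)]⟩, hglue⟩
      linarith [le_csSup hbdd this]
  rw [hseq] at hsS
  exact hsS.2
end OneDim


/-- A proper affine subspace of a normed space has empty interior. -/
lemma AffineSubspace.interior_eq_empty_of_ne_top {E : Type*} [NormedAddCommGroup E]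
    [NormedSpace ℝ E] (A : AffineSubspace ℝ E) (hA : A ≠ ⊤) :
    interior (A : Set E) = ∅ := by
  rw [eq_empty_iff_forall_notMem]
  intro z hz
  obtain ⟨r, hr, hball⟩ := Metric.mem_nhds_iff.mp (mem_interior_iff_mem_nhds.mp hz)
  have hzA : z ∈ A := interior_subset hz
  apply hA
  have hdir : A.direction = ⊤ := by
    rw [Submodule.eq_top_iff']
    intro v
    rcases eq_or_ne v 0 with rfl | hv
    · exact Submodule.zero_mem _
    · have hnorm : (0:ℝ) < ‖v‖ := norm_pos_iff.mpr hv
      set w := z + (r / (2 * ‖v‖)) • v with hw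
      have hwball : w ∈ ball z r := by
        rw [mem_ball, dist_eq_norm, hw]
        have : z + (r / (2 * ‖v‖)) • v - z = (r / (2 * ‖v‖)) • v := by abel
        rw [this, norm_smul]
        rw [Real.norm_eq_abs, abs_of_pos (by positivity)]
        rw [div_mul_eq_mul_div, mul_comm]
        rw [div_lt_iff₀ (by positivity)]
        nlinarith
      have hwA : w ∈ A := hball hwball
      have hmem : w -ᵥ z ∈ A.direction := AffineSubspace.vsub_mem_direction hwA hzA
      have hv' : v = (2 * ‖v‖ / r) • (w -ᵥ z) := by
        rw [vsub_eq_sub, hw]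
        have : z + (r / (2 * ‖v‖)) • v - z = (r / (2 * ‖v‖)) • v := by abel
        rw [this, smul_smul]
        rw [div_mul_div_comm]
        rw [show 2 * ‖v‖ * r / (r * (2 * ‖v‖)) = 1 by field_simp]
        rw [one_smul]
      rw [hv']
      exact Submodule.smul_mem _ _ hmem
  ext p
  simp only [AffineSubspace.mem_top, iff_true]
  have : p -ᵥ z ∈ A.direction := hdir ▸ Submodule.mem_top
  simpa using AffineSubspace.vadd_mem_of_mem_direction this hzA

/-- In a Baire space one can avoid countably many closed sets with empty interior,
within any ball. -/
lemma exists_near_avoiding {E : Type*} [MetricSpace E] [BaireSpace E] {ι : Type*} [Countable ι]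
    (C : ι → Set E) (hCc : ∀ i, IsClosed (C i)) (hCi : ∀ i, interior (C i) = ∅)
    (z : E) {η : ℝ} (hη : 0 < η) :
    ∃ z', dist z' z < η ∧ ∀ i, z' ∉ C i := by
  have hdense : Dense (⋂ i, (C i)ᶜ) := by
    apply dense_iInter_of_isOpen (fun i => (hCc i).isOpen_compl)
    intro i
    rw [← interior_eq_empty_iff_dense_compl]
    exact hCi i
  obtain ⟨z', hz'b, hz'm⟩ := hdense.exists_mem_open isOpen_ball (⟨z, mem_ball_self hη⟩)
  rw [mem_iInter] at hz'b
  exact ⟨z', by simpa [mem_ball] using hz'm, fun i => hz'b i⟩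

section BadSet
variable {d : ℕ}

/-- The set of points `y` such that the segment from `x'` to `y` meets the intrinsic
boundary `Z = S \ intrinsicInterior S` of a closed set `S` whose affine span is a
hyperplane not containing `x'` is closed and has empty interior. -/
lemma badT_closed_and_interior_empty (hd : 1 ≤ d) {S : Set (EuclideanSpace ℝ (Fin d))}
    (hScl : IsClosed S) (hSne : S.Nonempty) {x' : EuclideanSpace ℝ (Fin d)}
    (hx' : x' ∉ (affineSpan ℝ S : Set (EuclideanSpace ℝ (Fin d))))
    (hrank : Module.finrank ℝ (affineSpan ℝ S).direction = d - 1) :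
    IsClosed {y : EuclideanSpace ℝ (Fin d) |
        ∃ t ∈ Icc (0:ℝ) 1, x' + t • (y - x') ∈ S \ intrinsicInterior ℝ S} ∧
    interior {y : EuclideanSpace ℝ (Fin d) |
        ∃ t ∈ Icc (0:ℝ) 1, x' + t • (y - x') ∈ S \ intrinsicInterior ℝ S} = ∅ := by
  classical
  set A := affineSpan ℝ S with hA
  obtain ⟨z₀, hz₀⟩ := hSne
  have hz₀A : z₀ ∈ A := subset_affineSpan ℝ S hz₀
  have hfr : Module.finrank ℝ (EuclideanSpace ℝ (Fin d)) = d := finrank_euclideanSpace_fin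
  -- a normal vector
  have hAdir_ne_top : A.direction ≠ ⊤ := by
    intro h
    rw [h, finrank_top, hfr] at hrank
    omega
  haveI : CompleteSpace A.direction := FiniteDimensional.complete ℝ _
  have horth : A.directionᗮ ≠ ⊥ := by
    rw [Ne, Submodule.orthogonal_eq_bot_iff]
    exact hAdir_ne_top
  obtain ⟨n, hn, hnne⟩ := Submodule.exists_mem_ne_zero_of_ne_bot horth
  set c := ⟪n, z₀⟫ with hc
  -- the affine span is exactly the level set of ⟪n, ·⟫
  have hdirle : A.direction ≤ LinearMap.ker ((innerSL ℝ n : EuclideanSpace ℝ (Fin d) →L[ℝ] ℝ) : EuclideanSpace ℝ (Fin d) →ₗ[ℝ] ℝ) := by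
    intro v hv
    rw [LinearMap.mem_ker]
    have h1 := (Submodule.mem_orthogonal _ n).mp hn v hv
    show ⟪n, v⟫ = 0
    rw [real_inner_comm]
    exact h1
  have hkerrank : Module.finrank ℝ (LinearMap.ker ((innerSL ℝ n : EuclideanSpace ℝ (Fin d) →L[ℝ] ℝ) : EuclideanSpace ℝ (Fin d) →ₗ[ℝ] ℝ)) = d - 1 := by
    set ℓ : EuclideanSpace ℝ (Fin d) →ₗ[ℝ] ℝ :=
      ((innerSL ℝ n : (EuclideanSpace ℝ (Fin d)) →L[ℝ] ℝ) :
        EuclideanSpace ℝ (Fin d) →ₗ[ℝ] ℝ) with hℓ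
    have hrn := LinearMap.finrank_range_add_finrank_ker ℓ
    rw [hfr] at hrn
    have hle : Module.finrank ℝ (LinearMap.range ℓ) ≤ 1 := by
      simpa using Submodule.finrank_le (LinearMap.range ℓ)
    have hne : LinearMap.range ℓ ≠ ⊥ := by
      rw [Submodule.ne_bot_iff]
      exact ⟨⟪n, n⟫, ⟨n, rfl⟩, fun h => hnne (inner_self_eq_zero.mp h)⟩
    have h1 := Submodule.one_le_finrank_iff.mpr hne
    have hker : LinearMap.ker ((innerSL ℝ n : EuclideanSpace ℝ (Fin d) →L[ℝ] ℝ) : EuclideanSpace ℝ (Fin d) →ₗ[ℝ] ℝ) = LinearMap.ker ℓ := rfl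
    rw [hker]
    omega
  have hker_eq : A.direction = LinearMap.ker ((innerSL ℝ n : EuclideanSpace ℝ (Fin d) →L[ℝ] ℝ) : EuclideanSpace ℝ (Fin d) →ₗ[ℝ] ℝ) :=
    Submodule.eq_of_le_of_finrank_eq hdirle (by rw [hrank, hkerrank])
  have hspan_eq : (A : Set (EuclideanSpace ℝ (Fin d))) = {z : EuclideanSpace ℝ (Fin d) | ⟪n, z⟫ = c} := by
    ext z
    constructor
    · intro hz
      have hmem : z -ᵥ z₀ ∈ A.direction := AffineSubspace.vsub_mem_direction hz hz₀A
      rw [hker_eq, LinearMap.mem_ker] at hmem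
      have hmem' : ⟪n, z - z₀⟫ = (0:ℝ) := hmem
      rw [inner_sub_right] at hmem'
      show ⟪n, z⟫ = c
      rw [hc]; linarith [hmem']
    · intro hz
      have hmem : z -ᵥ z₀ ∈ A.direction := by
        rw [hker_eq, LinearMap.mem_ker]
        show ⟪n, z - z₀⟫ = (0:ℝ)
        rw [inner_sub_right]
        simp only [mem_setOf_eq] at hz
        rw [hz, hc]; ring
      simpa using AffineSubspace.vadd_mem_of_mem_direction hmem hz₀A
  have hφx' : ⟪n, x'⟫ ≠ c := by
    intro h
    exact hx' (by rw [hspan_eq]; exact h)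
  -- Z and its closedness
  set Z := S \ intrinsicInterior ℝ S with hZ
  have hZsubS : Z ⊆ S := diff_subset
  have hSsubA : S ⊆ (A : Set (EuclideanSpace ℝ (Fin d))) := subset_affineSpan ℝ S
  obtain ⟨U, hUopen, hUeq⟩ := isOpen_induced_iff.mp
    (isOpen_interior (s := ((↑) ⁻¹' S : Set (affineSpan ℝ S))))
  have hII : intrinsicInterior ℝ S = U ∩ (A : Set (EuclideanSpace ℝ (Fin d))) := by
    ext z
    simp only [intrinsicInterior, mem_image, mem_inter_iff]
    constructor
    · rintro ⟨⟨w, hwA⟩, hw, rfl⟩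
      rw [← hUeq] at hw
      exact ⟨hw, hwA⟩
    · rintro ⟨hzU, hzA⟩
      exact ⟨⟨z, hzA⟩, by rw [← hUeq]; exact hzU, rfl⟩
  have hZclosed : IsClosed Z := by
    have : Z = S ∩ Uᶜ := by
      ext z
      simp only [hZ, mem_diff, hII, mem_inter_iff, mem_compl_iff]
      constructor
      · rintro ⟨hzS, hz2⟩
        exact ⟨hzS, fun hzU => hz2 ⟨hzU, hSsubA hzS⟩⟩
      · rintro ⟨hzS, hzU⟩
        exact ⟨hzS, fun h => hzU h.1⟩
    rw [this]
    exact hScl.inter hUopen.isClosed_compl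
  set T := {y : EuclideanSpace ℝ (Fin d) | ∃ t ∈ Icc (0:ℝ) 1, x' + t • (y - x') ∈ Z} with hT
  constructor
  · -- T is closed
    apply IsSeqClosed.isClosed
    intro ys y hys hlim
    choose t ht hzt using hys
    obtain ⟨t₀, ht₀, φs, hmono, hφlim⟩ := isCompact_Icc.tendsto_subseq ht
    refine ⟨t₀, ht₀, ?_⟩
    have hten : Filter.Tendsto (fun nn => x' + t (φs nn) • (ys (φs nn) - x')) Filter.atTop
        (nhds (x' + t₀ • (y - x'))) := by
      apply Filter.Tendsto.const_add
      exact Filter.Tendsto.smul hφlim ((hlim.comp hmono.tendsto_atTop).sub tendsto_const_nhds)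
    exact hZclosed.mem_of_tendsto hten (Filter.Eventually.of_forall fun nn => hzt (φs nn))
  · -- T has empty interior
    rw [eq_empty_iff_forall_notMem]
    intro y₀ hy₀
    obtain ⟨r, hr, hball⟩ := Metric.mem_nhds_iff.mp (mem_interior_iff_mem_nhds.mp hy₀)
    obtain ⟨t₀, ht₀, hq₀⟩ := hball (mem_ball_self hr)
    set q₀ := x' + t₀ • (y₀ - x') with hq₀def
    have hq₀A : q₀ ∈ (A : Set (EuclideanSpace ℝ (Fin d))) := hSsubA (hZsubS hq₀)
    have hφq₀ : ⟪n, q₀⟫ = c := by rw [hspan_eq] at hq₀A; exact hq₀A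
    have ht₀ne : t₀ ≠ 0 := by
      intro h
      rw [h, zero_smul, add_zero] at hq₀def
      apply hφx'
      rw [hq₀def] at hφq₀
      exact hφq₀
    have ht₀pos : 0 < t₀ := lt_of_le_of_ne ht₀.1 (Ne.symm ht₀ne)
    -- every point of A near q₀ is in Z
    have hkey : ∀ h : EuclideanSpace ℝ (Fin d), h ∈ (A : Set (EuclideanSpace ℝ (Fin d))) → ‖h - q₀‖ < r * t₀ → h ∈ Z := by
      intro h hhA hhnear
      set yh := x' + (1/t₀) • (h - x') with hyh
      have hyhb : yh ∈ ball y₀ r := by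
        rw [mem_ball, dist_eq_norm]
        have hy₀eq : y₀ = x' + (1/t₀) • (q₀ - x') := by
          rw [hq₀def]
          have : x' + t₀ • (y₀ - x') - x' = t₀ • (y₀ - x') := by abel
          rw [this, smul_smul, one_div, inv_mul_cancel₀ ht₀ne, one_smul]
          abel
        have : yh - y₀ = (1/t₀) • (h - q₀) := by
          rw [hyh, hy₀eq]
          simp only [smul_sub]
          abel
        rw [this, norm_smul, Real.norm_eq_abs, abs_of_pos (by positivity)]
        rw [div_mul_eq_mul_div, one_mul, div_lt_iff₀ ht₀pos]
        linarith [hhnear]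
      obtain ⟨t', ht', hz'⟩ := hball hyhb
      have hφyh : ⟪n, yh - x'⟫ = (1/t₀) * (c - ⟪n, x'⟫) := by
        rw [hyh]
        have : x' + (1/t₀) • (h - x') - x' = (1/t₀) • (h - x') := by abel
        rw [this, real_inner_smul_right, inner_sub_right]
        have : ⟪n, h⟫ = c := by
          rw [hspan_eq] at hhA; exact hhA
        rw [this]
      have hφz' : ⟪n, x' + t' • (yh - x')⟫ = c := by
        have := hSsubA (hZsubS hz')
        rw [hspan_eq] at this; exact this
      rw [inner_add_right, real_inner_smul_right, hφyh] at hφz'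
      have ht'eq : t' = t₀ := by
        have hcx : c - ⟪n, x'⟫ ≠ 0 := fun h0 => hφx' (by linarith [sub_eq_zero.mp h0])
        have h2 : t' * ((1/t₀) * (c - ⟪n, x'⟫)) = c - ⟪n, x'⟫ := by linarith [hφz']
        have hinv : t₀ * (1/t₀) = 1 := mul_one_div_cancel ht₀ne
        have h3 : (t' - t₀) * (c - ⟪n, x'⟫) = 0 := by
          linear_combination t₀ * h2 - (t' * (c - ⟪n, x'⟫)) * hinv
        rcases mul_eq_zero.mp h3 with h1 | h4
        · exact sub_eq_zero.mp h1
        · exact absurd h4 hcx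
      have : x' + t' • (yh - x') = h := by
        rw [ht'eq, hyh]
        have : x' + (1/t₀) • (h - x') - x' = (1/t₀) • (h - x') := by abel
        rw [this, smul_smul, mul_one_div, div_self ht₀ne, one_smul]
        abel
      rw [this] at hz'
      exact hz'
    -- hence q₀ is in the intrinsic interior of S : contradiction
    have : q₀ ∈ intrinsicInterior ℝ S := by
      apply mem_intrinsicInterior.mpr
      refine ⟨⟨q₀, hq₀A⟩, ?_, rfl⟩
      apply mem_interior.mpr
      refine ⟨(↑) ⁻¹' ball q₀ (r * t₀), ?_, ?_, ?_⟩
      · rintro ⟨h, hhA⟩ hhb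
        simp only [mem_preimage, mem_ball, dist_eq_norm] at hhb
        exact hZsubS (hkey h hhA hhb)
      · exact isOpen_ball.preimage continuous_subtype_val
      · simp only [mem_preimage]
        exact mem_ball_self (by positivity)
    exact hq₀.2 this

end BadSet

lemma exists_good_pair_near {d K : ℕ} (hd : 1 ≤ d)
    (R : Fin K → Set (EuclideanSpace ℝ (Fin d)))
    (f : EuclideanSpace ℝ (Fin d) → ℝ)
    (hpart : IsPolyhedralPartition R)
    (hcont : Continuous f)
    (haff : ∀ k, ∃ (u : EuclideanSpace ℝ (Fin d)) (b : ℝ), ∀ x ∈ R k, f x = ⟪u, x⟫ + b)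
    (hyp : ∀ x ∈ frontierPoints R, ∀ v : EuclideanSpace ℝ (Fin d),
        ∃ ε > (0 : ℝ), ConvexOn ℝ (segment ℝ (x - ε • v) (x + ε • v)) f)
    (x y : EuclideanSpace ℝ (Fin d)) {η : ℝ} (hη : 0 < η) :
    ∃ x' y', dist x' x < η ∧ dist y' y < η ∧ ConvexOn ℝ (segment ℝ x' y') f := by
  classical
  obtain ⟨hpoly, hcover, hint, hdisj⟩ := hpart
  have hclosed : ∀ k, IsClosed (R k) := by
    intro k
    obtain ⟨-, m, a, c, hEq⟩ := hpoly k
    rw [hEq, show {x | ∀ i, ⟪a i, x⟫ ≤ c i}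
        = ⋂ i, {x : EuclideanSpace ℝ (Fin d) | ⟪a i, x⟫ ≤ c i} by ext w; simp]
    exact isClosed_iInter fun i =>
      isClosed_le (continuous_const.inner continuous_id) continuous_const
  have hconvx : ∀ k, Convex ℝ (R k) := by
    intro k
    obtain ⟨-, m, a, c, hEq⟩ := hpoly k
    rw [hEq, show {x | ∀ i, ⟪a i, x⟫ ≤ c i}
        = ⋂ i, {x : EuclideanSpace ℝ (Fin d) | ⟪a i, x⟫ ≤ c i} by ext w; simp]
    exact convex_iInter fun i =>
      convex_halfSpace_le
        ⟨fun u v => inner_add_right _ _ _, fun r u => real_inner_smul_right _ _ _⟩ (c i)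
  have hfr : Module.finrank ℝ (EuclideanSpace ℝ (Fin d)) = d := finrank_euclideanSpace_fin
  have hspan_ne_top : ∀ k l, k ≠ l → (R k ∩ R l).Nonempty →
      affineSpan ℝ (R k ∩ R l) ≠ ⊤ := by
    intro k l hkl hne htop
    have hcv : Convex ℝ (R k ∩ R l) := (hconvx k).inter (hconvx l)
    have h1 : (interior (R k ∩ R l)).Nonempty := by
      rw [hcv.interior_nonempty_iff_affineSpan_eq_top]; exact htop
    obtain ⟨z, hz⟩ := h1
    rw [interior_inter] at hz
    have h2 := hdisj k l hkl
    rw [eq_empty_iff_forall_notMem] at h2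
    exact h2 z hz
  have hdir_lt : ∀ k l, k ≠ l → (R k ∩ R l).Nonempty →
      Module.finrank ℝ (affineSpan ℝ (R k ∩ R l)).direction < d := by
    intro k l hkl hne
    have h1 : (affineSpan ℝ (R k ∩ R l)).direction ≠ ⊤ := by
      intro h
      obtain ⟨z, hz⟩ := id hne
      exact hspan_ne_top k l hkl hne
        ((AffineSubspace.direction_eq_top_iff_of_nonempty
          ⟨z, subset_affineSpan ℝ _ hz⟩).mp h)
    have := Submodule.finrank_lt (K := ℝ) (V := EuclideanSpace ℝ (Fin d))
      h1
    rwa [hfr] at this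
  -- choose x' avoiding all spans of pairwise intersections
  set C1 : Fin K × Fin K → Set (EuclideanSpace ℝ (Fin d)) := fun p =>
    if p.1 ≠ p.2 ∧ (R p.1 ∩ R p.2).Nonempty
      then (affineSpan ℝ (R p.1 ∩ R p.2) : Set (EuclideanSpace ℝ (Fin d))) else ∅ with hC1
  obtain ⟨x', hx'd, hx'av⟩ := exists_near_avoiding C1
    (fun p => by
      rw [hC1]
      dsimp only
      split_ifs with h
      · exact (affineSpan ℝ (R p.1 ∩ R p.2)).closed_of_finiteDimensional
      · exact isClosed_empty)
    (fun p => by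
      rw [hC1]
      dsimp only
      split_ifs with h
      · exact AffineSubspace.interior_eq_empty_of_ne_top _ (hspan_ne_top _ _ h.1 h.2)
      · exact interior_empty)
    x hη
  have hx'span : ∀ k l, k ≠ l → (R k ∩ R l).Nonempty →
      x' ∉ (affineSpan ℝ (R k ∩ R l) : Set (EuclideanSpace ℝ (Fin d))) := by
    intro k l hkl hne hmem
    have h1 := hx'av (k, l)
    rw [hC1] at h1
    dsimp only at h1
    rw [if_pos ⟨hkl, hne⟩] at h1
    exact h1 hmem
  -- choose y' avoiding all bad sets relative to x'
  set C2 : Fin K × Fin K → Set (EuclideanSpace ℝ (Fin d)) := fun p =>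
    if h : p.1 ≠ p.2 ∧ (R p.1 ∩ R p.2).Nonempty then
      (if Neighboring R p.1 p.2 then
        {yy : EuclideanSpace ℝ (Fin d) | ∃ t ∈ Icc (0:ℝ) 1, x' + t • (yy - x') ∈
            (R p.1 ∩ R p.2) \ intrinsicInterior ℝ (R p.1 ∩ R p.2)}
      else (affineSpan ℝ (insert x' (R p.1 ∩ R p.2)) : Set (EuclideanSpace ℝ (Fin d))))
    else ∅ with hC2def
  have hC2 : ∀ p, IsClosed (C2 p) ∧ interior (C2 p) = ∅ := by
    intro p
    rw [hC2def]
    dsimp only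
    split_ifs with h hnb
    · exact badT_closed_and_interior_empty hd ((hclosed p.1).inter (hclosed p.2)) h.2
        (hx'span _ _ h.1 h.2) hnb.2.2
    · have hne : (affineSpan ℝ (insert x' (R p.1 ∩ R p.2))) ≠ ⊤ := by
        intro htop
        obtain ⟨z₀, hz₀⟩ := h.2
        have hz₀s : z₀ ∈ affineSpan ℝ (R p.1 ∩ R p.2) := subset_affineSpan ℝ _ hz₀
        have hxz : x' -ᵥ z₀ ≠ 0 := by
          intro h0
          have : x' = z₀ := by
            have := sub_eq_zero.mp (by simpa using h0)
            exact this
          exact hx'span _ _ h.1 h.2 (this ▸ hz₀s)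
        have hins : (affineSpan ℝ (insert x' (R p.1 ∩ R p.2))).direction
            = Submodule.span ℝ {x' -ᵥ z₀} ⊔ (affineSpan ℝ (R p.1 ∩ R p.2)).direction := by
          rw [← affineSpan_insert_affineSpan, AffineSubspace.direction_affineSpan_insert hz₀s]
        have hfin1 : Module.finrank ℝ (Submodule.span ℝ {x' -ᵥ z₀}) = 1 :=
          finrank_span_singleton hxz
        have hsup := Submodule.finrank_sup_add_finrank_inf_eq
          (Submodule.span ℝ {x' -ᵥ z₀}) (affineSpan ℝ (R p.1 ∩ R p.2)).direction
        have hlt := hdir_lt _ _ h.1 h.2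
        have hnotn : Module.finrank ℝ (affineSpan ℝ (R p.1 ∩ R p.2)).direction ≠ d - 1 := by
          intro he
          exact hnb ⟨h.1, h.2, he⟩
        have htopfr : Module.finrank ℝ
            (affineSpan ℝ (insert x' (R p.1 ∩ R p.2))).direction = d := by
          rw [htop, AffineSubspace.direction_top, finrank_top, hfr]
        rw [hins] at htopfr
        omega
      exact ⟨(affineSpan ℝ (insert x' (R p.1 ∩ R p.2))).closed_of_finiteDimensional,
        AffineSubspace.interior_eq_empty_of_ne_top _ hne⟩
    · exact ⟨isClosed_empty, interior_empty⟩
  obtain ⟨y', hy'd, hy'av⟩ := exists_near_avoiding C2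
    (fun p => (hC2 p).1) (fun p => (hC2 p).2) y hη
  refine ⟨x', y', hx'd, hy'd, ?_⟩
  rcases eq_or_ne y' x' with rfl | hnexy
  · rw [segment_same]
    refine ⟨convex_singleton _, ?_⟩
    intro p hp q hq a b ha hb hab
    rw [mem_singleton_iff] at hp hq
    rw [hq, ← hp]
    have h1 : a • p + b • p = p := by rw [← add_smul, hab, one_smul]
    have h2 : a • f p + b • f p = f p := by rw [← add_smul, hab, one_smul]
    rw [h1, h2]
  · set v := y' - x' with hv
    set γ : ℝ → EuclideanSpace ℝ (Fin d) := fun s => x' + s • v with hγ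
    have hγcont : Continuous γ := by
      rw [hγ]
      exact continuous_const.add (continuous_id.smul continuous_const)
    have hcomb : ∀ (s1 s2 a b : ℝ), a + b = 1 →
        γ (a * s1 + b * s2) = a • γ s1 + b • γ s2 := by
      intro s1 s2 a b hab
      simp only [hγ]
      rw [show (a:ℝ) = 1 - b from by linarith]
      module
    have hloc : ∀ t ∈ Icc (0:ℝ) 1, ∃ δ > (0:ℝ),
        ConvexOn ℝ (Icc (t-δ) (t+δ)) (f ∘ γ) := by
      intro t ht
      set z := γ t with hz
      have hzG : (∃ k, z ∈ interior (R k)) ∨ z ∈ frontierPoints R := by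
        by_contra hc
        push_neg at hc
        obtain ⟨hnint, hnF⟩ := hc
        have hcov : z ∈ ⋃ k, R k := by rw [hcover]; trivial
        obtain ⟨k, hk⟩ := mem_iUnion.mp hcov
        have hzfr : z ∈ closure ((R k)ᶜ) := by
          rw [closure_compl]
          exact hnint k
        have hsub : (R k)ᶜ ⊆ ⋃ l ∈ {m : Fin K | m ≠ k}, R l := by
          intro w hw
          have : w ∈ ⋃ m, R m := by rw [hcover]; trivial
          obtain ⟨m, hm⟩ := mem_iUnion.mp this
          have hmk : m ≠ k := by rintro rfl; exact hw hm
          exact mem_biUnion hmk hm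
        have hcl : IsClosed (⋃ l ∈ {m : Fin K | m ≠ k}, R l) :=
          (Set.toFinite _).isClosed_biUnion fun l _ => hclosed l
        have hzcl : z ∈ ⋃ l ∈ {m : Fin K | m ≠ k}, R l := by
          have h2 := closure_mono hsub hzfr
          rwa [hcl.closure_eq] at h2
        rw [mem_iUnion₂] at hzcl
        obtain ⟨l, hlk, hzl⟩ := hzcl
        have hkl : k ≠ l := Ne.symm hlk
        have hpairne : (R k ∩ R l).Nonempty := ⟨z, hk, hzl⟩
        by_cases hnb : Neighboring R k l
        · by_cases hzi : z ∈ intrinsicInterior ℝ (R k ∩ R l)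
          · apply hnF
            rw [frontierPoints, mem_iUnion]
            exact ⟨k, mem_iUnion.mpr ⟨l, mem_iUnion.mpr ⟨hnb, hzi⟩⟩⟩
          · have hyT := hy'av (k, l)
            rw [hC2def] at hyT
            dsimp only at hyT
            rw [dif_pos ⟨hkl, hpairne⟩, if_pos hnb] at hyT
            exact hyT ⟨t, ht, ⟨⟨hk, hzl⟩, hzi⟩⟩
        · have hyW := hy'av (k, l)
          rw [hC2def] at hyW
          dsimp only at hyW
          rw [dif_pos ⟨hkl, hpairne⟩, if_neg hnb] at hyW
          rcases eq_or_ne t 0 with rfl | htne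
          · apply hx'span k l hkl hpairne
            have hzx : z = x' := by rw [hz, hγ]; simp
            rw [← hzx]
            exact subset_affineSpan ℝ _ ⟨hk, hzl⟩
          · apply hyW
            have hx'W : x' ∈ affineSpan ℝ (insert x' (R k ∩ R l)) :=
              subset_affineSpan ℝ _ (mem_insert _ _)
            have hzW : z ∈ affineSpan ℝ (insert x' (R k ∩ R l)) :=
              subset_affineSpan ℝ _ (mem_insert_of_mem _ ⟨hk, hzl⟩)
            have hy'eq : y' = (1/t) • (z -ᵥ x') +ᵥ x' := by
              rw [hz]
              simp only [hγ, vsub_eq_sub, vadd_eq_add]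
              rw [show x' + t • v - x' = t • v from by abel, smul_smul, one_div,
                inv_mul_cancel₀ htne, one_smul, hv]
              abel
            rw [hy'eq]
            exact AffineSubspace.smul_vsub_vadd_mem _ _ hzW hx'W hx'W
      rcases hzG with ⟨k, hzk⟩ | hzF
      · obtain ⟨u, b₀, hub⟩ := haff k
        have hopen : IsOpen (γ ⁻¹' interior (R k)) := isOpen_interior.preimage hγcont
        have htm : t ∈ γ ⁻¹' interior (R k) := by
          rw [mem_preimage, ← hz]; exact hzk
        obtain ⟨δ, hδ, hball⟩ := Metric.isOpen_iff.mp hopen t htm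
        refine ⟨δ/2, by positivity, ?_⟩
        have hsub2 : Icc (t - δ/2) (t + δ/2) ⊆ γ ⁻¹' R k := by
          intro s hs
          have hsb : s ∈ ball t δ := by
            rw [mem_ball, Real.dist_eq, abs_sub_lt_iff]
            exact ⟨by linarith [hs.1, hs.2], by linarith [hs.1, hs.2]⟩
          exact preimage_mono interior_subset (hball hsb)
        refine ⟨convex_Icc _ _, ?_⟩
        intro s1 hs1 s2 hs2 a b ha hb hab
        have hmem : a * s1 + b * s2 ∈ Icc (t - δ/2) (t + δ/2) := by
          have := (convex_Icc _ _) hs1 hs2 ha hb hab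
          simpa using this
        simp only [Function.comp, smul_eq_mul]
        rw [hub _ (hsub2 hmem), hub _ (hsub2 hs1), hub _ (hsub2 hs2)]
        have hinner : ⟪u, γ (a*s1 + b*s2)⟫ = a * ⟪u, γ s1⟫ + b * ⟪u, γ s2⟫ := by
          rw [hcomb s1 s2 a b hab, inner_add_right, real_inner_smul_right,
            real_inner_smul_right]
        rw [hinner]
        have hrng : a * (⟪u, γ s1⟫ + b₀) + b * (⟪u, γ s2⟫ + b₀)
            = a * ⟪u, γ s1⟫ + b * ⟪u, γ s2⟫ + (a + b) * b₀ := by ring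
        rw [hrng, hab, one_mul]
      · obtain ⟨ε, hε, hconvseg⟩ := hyp z hzF v
        refine ⟨ε, hε, ?_⟩
        have hmap : ∀ s ∈ Icc (t - ε) (t + ε), γ s ∈ segment ℝ (z - ε • v) (z + ε • v) := by
          intro s hs
          rw [segment_eq_image']
          refine ⟨(s - t + ε)/(2*ε), ⟨div_nonneg (by linarith [hs.1]) (by positivity), ?_⟩, ?_⟩
          · rw [div_le_one (by positivity)]
            linarith [hs.1, hs.2]
          · beta_reduce
            have hdiff : (z + ε • v) - (z - ε • v) = (2*ε) • v := by module
            rw [hdiff, smul_smul, div_mul_cancel₀ _ (by positivity : (2*ε) ≠ 0)]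
            rw [hz]
            simp only [hγ]
            module
        refine ⟨convex_Icc _ _, ?_⟩
        intro s1 hs1 s2 hs2 a b ha hb hab
        simp only [Function.comp, smul_eq_mul]
        rw [hcomb s1 s2 a b hab]
        exact hconvseg.2 (hmap s1 hs1) (hmap s2 hs2) ha hb hab
    have hgc : Continuous (f ∘ γ) := hcont.comp hγcont
    have hIcc := convexOn_icc_of_local hgc hloc
    refine ⟨convex_segment _ _, ?_⟩
    rintro p hp q hq a b ha hb hab
    rw [segment_eq_image'] at hp hq
    obtain ⟨s1, hs1, rfl⟩ := hp
    obtain ⟨s2, hs2, rfl⟩ := hq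
    have hthis := hIcc.2 hs1 hs2 ha hb hab
    simp only [Function.comp, smul_eq_mul] at hthis
    rw [hcomb s1 s2 a b hab] at hthis
    simp only [smul_eq_mul]
    exact hthis

/-- A CPWL function `f` with compatible polyhedral partition `(R k)` is convex on `ℝ^d`
if and only if for every frontier point `x ∈ 𝓕` and every direction `v ∈ ℝ^d` there is
`ε > 0` such that the restriction of `f` to the segment `[x - εv, x + εv]` is convex. -/
theorem convex_cpwl_iff_segment_convex_at_frontiers {d K : ℕ}
    (R : Fin K → Set (EuclideanSpace ℝ (Fin d)))
    (f : EuclideanSpace ℝ (Fin d) → ℝ)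
    (hpart : IsPolyhedralPartition R)
    (hcont : Continuous f)
    (haff : ∀ k, ∃ (u : EuclideanSpace ℝ (Fin d)) (b : ℝ), ∀ x ∈ R k, f x = ⟪u, x⟫ + b) :
    ConvexOn ℝ Set.univ f ↔
      ∀ x ∈ frontierPoints R, ∀ v : EuclideanSpace ℝ (Fin d),
        ∃ ε > (0 : ℝ), ConvexOn ℝ (segment ℝ (x - ε • v) (x + ε • v)) f := by
  constructor
  · intro hconv x _ v
    exact ⟨1, one_pos, hconv.subset (subset_univ _) (convex_segment _ _)⟩
  · intro hyp
    rcases Nat.eq_zero_or_pos d with rfl | hd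
    · refine ⟨convex_univ, ?_⟩
      intro p _ q _ a b ha hb hab
      have hpq : q = p := PiLp.ext fun i => i.elim0
      rw [hpq]
      have h1 : a • p + b • p = p := by rw [← add_smul, hab, one_smul]
      have h2 : a • f p + b • f p = f p := by rw [← add_smul, hab, one_smul]
      rw [h1, h2]
    · refine ⟨convex_univ, ?_⟩
      intro p _ q _ a b ha hb hab
      have hseq : ∀ m : ℕ, ∃ pr : EuclideanSpace ℝ (Fin d) × EuclideanSpace ℝ (Fin d),
          dist pr.1 p < 1/((m:ℝ)+1) ∧ dist pr.2 q < 1/((m:ℝ)+1) ∧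
            ConvexOn ℝ (segment ℝ pr.1 pr.2) f := by
        intro m
        obtain ⟨x', y', h1, h2, h3⟩ := exists_good_pair_near hd R f hpart hcont haff hyp p q
          (show (0:ℝ) < 1/((m:ℝ)+1) by positivity)
        exact ⟨(x', y'), h1, h2, h3⟩
      choose pr h1 h2 h3 using hseq
      have hlim0 : Filter.Tendsto (fun m : ℕ => 1/((m:ℝ)+1)) Filter.atTop (nhds 0) :=
        tendsto_one_div_add_atTop_nhds_zero_nat
      have hxlim : Filter.Tendsto (fun m => (pr m).1) Filter.atTop (nhds p) := by
        rw [tendsto_iff_dist_tendsto_zero]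
        exact squeeze_zero (fun m => dist_nonneg) (fun m => (h1 m).le) hlim0
      have hylim : Filter.Tendsto (fun m => (pr m).2) Filter.atTop (nhds q) := by
        rw [tendsto_iff_dist_tendsto_zero]
        exact squeeze_zero (fun m => dist_nonneg) (fun m => (h2 m).le) hlim0
      have hineq : ∀ m, f (a • (pr m).1 + b • (pr m).2)
          ≤ a * f ((pr m).1) + b * f ((pr m).2) := by
        intro m
        have := (h3 m).2 (left_mem_segment ℝ _ _) (right_mem_segment ℝ _ _) ha hb hab
        simpa using this
      have hL : Filter.Tendsto (fun m => f (a • (pr m).1 + b • (pr m).2)) Filter.atTop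
          (nhds (f (a • p + b • q))) :=
        ((hcont.tendsto _).comp ((hxlim.const_smul a).add (hylim.const_smul b)))
      have hR : Filter.Tendsto (fun m => a * f ((pr m).1) + b * f ((pr m).2)) Filter.atTop
          (nhds (a * f p + b * f q)) :=
        ((((hcont.tendsto _).comp hxlim).const_mul a).add
          (((hcont.tendsto _).comp hylim).const_mul b))
      have := le_of_tendsto_of_tendsto' hL hR hineq
      simpa [smul_eq_mul] using this
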